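/- arXiv:2509.06106 — 2 statements merged into one kernel-verified Lean document; each statement's English description precedes it below -/
import Mathlib

section
/- With the notation of the free 2-step nilpotent Lie algebra 𝔤₂(ℝ^d): two functionals ℓ, ℓ̃ ∈ 𝔤₂* lie in the same coadjoint orbit if and only if they agree on the second layer (β̃_{ij} = β_{ij} for all i,j) and α̃ − α lies in the column space of the skew-symmetric matrix B defined by B_{ij} = β_{ij}. -/
/-!
Coadjoint action by `exp X` only sees the first-layer component `x = X.1`: the bracket of `𝔤₂`
lands in the second layer, and since `β` is skew, `ℓ ∘ Ad(exp(−X))` is again a `g2Functional`,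
with `β` unchanged and `α` moved to `α + β x`. A functional determines its coefficients
(evaluate at basis vectors), so the orbit of `ℓ` is exactly `{(α + β x, β) : x ∈ ℝ^d}`.
-/

/-- Model of the free 2-step nilpotent Lie algebra `𝔤₂(ℝ^d)`. -/
abbrev G2Model (d : ℕ) := (Fin d → ℝ) × Matrix (Fin d) (Fin d) ℝ

/-- The Lie bracket of `𝔤₂(ℝ^d)` in the model. -/
def g2Bracket (d : ℕ) (X Y : G2Model d) : G2Model d :=
  (0, fun i j => X.1 i * Y.1 j - Y.1 i * X.1 j)

/-- The functional `ℓ = Σ α_i ℓ_i + Σ β_{ij} ℓ_{ij}` on `𝔤₂(ℝ^d)` determined by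
coefficients `α` and the skew-symmetric coefficient matrix `β`. -/
noncomputable def g2Functional (d : ℕ) (α : Fin d → ℝ) (β : Matrix (Fin d) (Fin d) ℝ) :
    G2Model d → ℝ :=
  fun Y => (∑ i, α i * Y.1 i) + (1 / 2) * ∑ i, ∑ j, β i j * Y.2 i j

open Matrix

theorem sum_sum_mul_sub_mul_of_transpose_eq_neg {n : Type*} [Fintype n]
    {β : Matrix n n ℝ} (hβ : βᵀ = -β) (x y : n → ℝ) :
    ∑ i, ∑ j, β i j * (x i * y j - y i * x j) = -2 * (y ⬝ᵥ β *ᵥ x) := by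
  have hswap : ∑ i, ∑ j, β i j * (x i * y j) = -∑ i, ∑ j, β i j * (y i * x j) := by
    rw [Finset.sum_comm, ← Finset.sum_neg_distrib]
    refine Finset.sum_congr rfl fun i _ => ?_
    rw [← Finset.sum_neg_distrib]
    refine Finset.sum_congr rfl fun j _ => ?_
    rw [show β j i = -β i j from congrFun (congrFun hβ i) j]
    ring
  have hdot : y ⬝ᵥ β *ᵥ x = ∑ i, ∑ j, β i j * (y i * x j) := by
    simp only [dotProduct, mulVec, Finset.mul_sum]
    exact Finset.sum_congr rfl fun i _ => Finset.sum_congr rfl fun j _ => by ring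
  simp only [mul_sub, Finset.sum_sub_distrib, hswap, hdot]
  ring

theorem g2Functional_sub_g2Bracket {d : ℕ} (α : Fin d → ℝ) {β : Matrix (Fin d) (Fin d) ℝ}
    (hβ : βᵀ = -β) (X Y : G2Model d) :
    g2Functional d α β (Y - g2Bracket d X Y) = g2Functional d (α + β *ᵥ X.1) β Y := by
  have hα : ∑ i, (α + β *ᵥ X.1) i * Y.1 i = ∑ i, α i * Y.1 i + Y.1 ⬝ᵥ β *ᵥ X.1 := by
    simp only [Pi.add_apply, add_mul, Finset.sum_add_distrib, dotProduct, mul_comm]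
  have hskew := sum_sum_mul_sub_mul_of_transpose_eq_neg hβ X.1 Y.1
  simp only [g2Functional, g2Bracket, Prod.fst_sub, Prod.snd_sub, sub_zero, hα]
  change _ + 1 / 2 * ∑ i, ∑ j, β i j * (Y.2 i j - (X.1 i * Y.1 j - Y.1 i * X.1 j)) = _
  simp only [mul_sub, Finset.sum_sub_distrib] at hskew ⊢
  linarith

theorem g2Functional_inj {d : ℕ} {α α' : Fin d → ℝ} {β β' : Matrix (Fin d) (Fin d) ℝ} :
    g2Functional d α β = g2Functional d α' β' ↔ α = α' ∧ β = β' := by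
  refine ⟨fun h => ⟨funext fun i => ?_, Matrix.ext fun i j => ?_⟩, fun h => h.1 ▸ h.2 ▸ rfl⟩
  · simpa [g2Functional, Pi.single_apply] using congrFun h (Pi.single i 1, 0)
  · simpa [g2Functional, Matrix.single_apply, ite_and, Finset.sum_ite_eq] using
      congrFun h (0, Matrix.single i j 1)

theorem same_coadjoint_orbit_iff_g2_general (d : ℕ) (α α' : Fin d → ℝ)
    (β β' : Matrix (Fin d) (Fin d) ℝ)
    (hβ : β.transpose = -β) :
    (∃ X : G2Model d,
        g2Functional d α' β' = fun Y => g2Functional d α β (Y - g2Bracket d X Y)) ↔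
      (β' = β ∧ ∃ g : Fin d → ℝ, ∀ i, α' i - α i = ∑ j, β i j * g j) := by
  have hcoord (g : Fin d → ℝ) : α' = α + β *ᵥ g ↔ ∀ i, α' i - α i = ∑ j, β i j * g j := by
    simp only [funext_iff, Pi.add_apply, mulVec, dotProduct, sub_eq_iff_eq_add']
  simp only [g2Functional_sub_g2Bracket α hβ, g2Functional_inj, ← hcoord]
  exact ⟨fun ⟨X, hα, hβ'⟩ => ⟨hβ', X.1, hα⟩, fun ⟨hβ', g, hα⟩ => ⟨(g, 0), hα, hβ'⟩⟩

/-- Two functionals `ℓ, ℓ̃ ∈ 𝔤₂(ℝ^d)*` lie in the same coadjoint orbit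
(`ℓ̃ = ℓ ∘ Ad(exp(−X))` for some `X`, where `Ad(exp(−X)) Y = Y − [X,Y]`) if and
only if they agree on the second layer (`β̃ = β`) and `α̃ − α` lies in the column
space of the skew-symmetric matrix `B` with `B_{ij} = β_{ij}`. -/
theorem same_coadjoint_orbit_iff_g2 (d : ℕ) (α α' : Fin d → ℝ)
    (β β' : Matrix (Fin d) (Fin d) ℝ)
    (hβ : β.transpose = -β) (hβ' : β'.transpose = -β') :
    (∃ X : G2Model d,
        g2Functional d α' β' = fun Y => g2Functional d α β (Y - g2Bracket d X Y)) ↔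
      (β' = β ∧ ∃ g : Fin d → ℝ, ∀ i, α' i - α i = ∑ j, β i j * g j) :=
  same_coadjoint_orbit_iff_g2_general d α α' β β' hβ
end

section
/- In the free 3-step nilpotent Lie algebra 𝔤₃(ℝ²) with basis X₁, X₂ of the first layer, X₁₂ = [X₁,X₂], and X₁₁₂ = [X₁,X₁₂], X₂₁₂ = [X₂,X₁₂] of the third layer, a functional ℓ ∈ 𝔤₃* is in general position (its coadjoint orbit has maximal dimension in every quotient 𝔤₃*/𝔤₃*(j) with respect to the strong Malcev basis X₁₁₂, X₂₁₂, X₁₂, X₁, X₂) if and only if ℓ(X₁₁₂) ≠ 0. -/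
/-!
The rows `X₁₁₂, X₂₁₂` of the orbit differential vanish, and its kernel contains
`(α₂₁₂, -α₁₁₂, α₁₂)`, the coordinates of the element `α₂₁₂X₁ - α₁₁₂X₂ + α₁₂X₁₂` of the
stabiliser of `ℓ`. Hence the first `j` rows have rank at most `min (j - 2) 2`, i.e.
`0, 0, 0, 1, 2, 2` for `j = 0, …, 5`. If `α₁₁₂ ≠ 0` the minor on the rows `X₁₂, X₁` and the
columns `g₁, g₁₂` is `diag(-α₁₁₂, α₁₁₂)`, so every bound is attained. If `α₁₁₂ = 0` the first
four rows are multiples of `(0, 1, 0)`, so at `j = 4` the rank drops below the generic value `2`.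
-/

/-- The differential at the identity of the coadjoint orbit map of `𝔤₃(ℝ²)` at the
functional with coefficients `(α₁, α₂, α₁₂, α₁₁₂, α₂₁₂)`, with rows indexed by the
strong Malcev ordering `(X₁₁₂, X₂₁₂, X₁₂, X₁, X₂)` of basis coefficients and
columns by the parameters `(g₁, g₂, g₁₂)`.  The (local, hence orbit) dimension of
the coadjoint orbit of `ℓ` in the quotient `𝔤₃*/𝔤₃*(j)` is the rank of the
submatrix formed by the first `j` rows. -/
noncomputable def coadDiffG3R2 (α₁₂ α₁₁₂ α₂₁₂ : ℝ) : Matrix (Fin 5) (Fin 3) ℝ :=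
  ![![0, 0, 0],
    ![0, 0, 0],
    ![-α₁₁₂, -α₂₁₂, 0],
    ![0, α₁₂, α₁₁₂],
    ![-α₁₂, 0, α₂₁₂]]

namespace Matrix

open Finset

variable {R : Type*} {m n k : Type*} [Fintype n]

theorem rank_lt_card_width_of_mulVec_eq_zero [Field R] {A : Matrix m n R} {v : n → R}
    (hv : v ≠ 0) (hAv : A *ᵥ v = 0) : A.rank < Fintype.card n := by
  have hker : 1 ≤ Module.finrank R (LinearMap.ker A.mulVecLin) :=
    Submodule.one_le_finrank_iff.2 <| (Submodule.ne_bot_iff _).2 ⟨v, hAv, hv⟩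
  have := A.mulVecLin.finrank_range_add_finrank_ker
  rw [Module.finrank_fintype_fun_eq_card] at this
  rw [rank]
  omega

theorem rank_le_sub_of_row_eq_zero [CommSemiring R] [StrongRankCondition R] {p : ℕ}
    (A : Matrix (Fin p) n R) (q : ℕ) (h : ∀ i : Fin p, (i : ℕ) < q → A i = 0) :
    A.rank ≤ p - q := by
  classical
  calc A.rank ≤ #{i : Fin p | ¬ (i : ℕ) < q} :=
        rank_le_card_of_support_subset _ _ fun i hi => by simpa using mt (h i) hi
    _ = p - q := by
      have := card_filter_add_card_filter_not (s := univ) fun i : Fin p => (i : ℕ) < q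
      rw [Fin.card_filter_val_lt, card_univ, Fintype.card_fin] at this
      omega

theorem card_le_rank_of_det_submatrix_ne_zero [Fintype k] [DecidableEq k] [CommRing R]
    [IsDomain R] (A : Matrix m n R) (r : k → m) (c : k → n) (h : (A.submatrix r c).det ≠ 0) :
    Fintype.card k ≤ A.rank :=
  (rank_of_det_ne_zero h).symm.le.trans (rank_submatrix_le A r c)

end Matrix

open Matrix

noncomputable def orbitDimG3R2 (j : ℕ) (hj : j ≤ 5) (α₁₂ α₁₁₂ α₂₁₂ : ℝ) : ℕ :=
  ((coadDiffG3R2 α₁₂ α₁₁₂ α₂₁₂).submatrix (Fin.castLE hj) id).rank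

section

variable (α₁₂ α₁₁₂ α₂₁₂ : ℝ)

theorem coadDiffG3R2_mulVec_eq_zero :
    coadDiffG3R2 α₁₂ α₁₁₂ α₂₁₂ *ᵥ ![α₂₁₂, -α₁₁₂, α₁₂] = 0 := by
  ext i
  fin_cases i <;> simp [coadDiffG3R2, mulVec, dotProduct, Fin.sum_univ_succ] <;> ring

theorem rank_coadDiffG3R2_le_two : (coadDiffG3R2 α₁₂ α₁₁₂ α₂₁₂).rank ≤ 2 := by
  by_cases hv : ![α₂₁₂, -α₁₁₂, α₁₂] = 0
  · have h0 : coadDiffG3R2 α₁₂ α₁₁₂ α₂₁₂ = 0 := by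
      simp only [cons_eq_zero_iff, neg_eq_zero] at hv
      obtain ⟨rfl, rfl, rfl, -⟩ := hv
      ext i k
      fin_cases i <;> fin_cases k <;> simp [coadDiffG3R2]
    simp [h0]
  · exact Nat.le_of_lt_succ <|
      rank_lt_card_width_of_mulVec_eq_zero hv (coadDiffG3R2_mulVec_eq_zero α₁₂ α₁₁₂ α₂₁₂)

theorem orbitDimG3R2_le (j : ℕ) (hj : j ≤ 5) :
    orbitDimG3R2 j hj α₁₂ α₁₁₂ α₂₁₂ ≤ min (j - 2) 2 := by
  refine le_min (rank_le_sub_of_row_eq_zero _ 2 fun ⟨i, hi⟩ hi2 => ?_)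
    ((rank_submatrix_le _ _ _).trans (rank_coadDiffG3R2_le_two α₁₂ α₁₁₂ α₂₁₂))
  ext k
  interval_cases i <;> fin_cases k <;> rfl

theorem orbitDimG3R2_four_le_one : orbitDimG3R2 4 (by norm_num) α₁₂ 0 α₂₁₂ ≤ 1 := by
  have : (coadDiffG3R2 α₁₂ 0 α₂₁₂).submatrix (Fin.castLE (by norm_num)) id =
      vecMulVec ![0, 0, -α₂₁₂, α₁₂] ![0, 1, 0] := by
    ext i k
    fin_cases i <;> fin_cases k <;> simp [submatrix_apply, vecMulVec] <;> simp [coadDiffG3R2]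
  rw [orbitDimG3R2, this]
  exact rank_vecMulVec_le _ _

variable {α₁₁₂}

theorem le_orbitDimG3R2 (h : α₁₁₂ ≠ 0) (j : ℕ) (hj : j ≤ 5) :
    min (j - 2) 2 ≤ orbitDimG3R2 j hj α₁₂ α₁₁₂ α₂₁₂ := by
  set A := (coadDiffG3R2 α₁₂ α₁₁₂ α₂₁₂).submatrix (Fin.castLE hj) id
  change min (j - 2) 2 ≤ A.rank
  obtain hj3 | rfl | hj4 : j < 3 ∨ j = 3 ∨ 4 ≤ j := by omega
  · omega
  · have := card_le_rank_of_det_submatrix_ne_zero A ![2] ![0]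
      (by simp only [A, det_fin_one, submatrix_apply]; simpa [coadDiffG3R2] using h)
    rw [Fintype.card_fin] at this
    omega
  · have := card_le_rank_of_det_submatrix_ne_zero A ![⟨2, by omega⟩, ⟨3, hj4⟩] ![0, 2]
      (by simp only [A, det_fin_two, submatrix_apply]; simpa [coadDiffG3R2, Fin.castLE] using h)
    rw [Fintype.card_fin] at this
    omega

end

theorem g3r2_general_position_iff_general (α₁₂ α₁₁₂ α₂₁₂ : ℝ) :
    (∀ (j : ℕ) (hj : j ≤ 5) (b₁ b₂ b₁₂ b₁₁₂ b₂₁₂ : ℝ),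
        ((coadDiffG3R2 b₁₂ b₁₁₂ b₂₁₂).submatrix (Fin.castLE hj) id).rank ≤
          ((coadDiffG3R2 α₁₂ α₁₁₂ α₂₁₂).submatrix (Fin.castLE hj) id).rank) ↔
      α₁₁₂ ≠ 0 := by
  refine ⟨fun h hα => ?_, fun hα j hj _ _ b₁₂ b₁₁₂ b₂₁₂ => ?_⟩
  · subst hα
    have : 2 ≤ 1 := calc
      2 = min (4 - 2) 2 := rfl
      _ ≤ orbitDimG3R2 4 _ 0 1 0 := le_orbitDimG3R2 0 0 one_ne_zero 4 (by norm_num)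
      _ ≤ orbitDimG3R2 4 _ α₁₂ 0 α₂₁₂ := h 4 (by norm_num) 0 0 0 1 0
      _ ≤ 1 := orbitDimG3R2_four_le_one α₁₂ α₂₁₂
    omega
  · exact (orbitDimG3R2_le b₁₂ b₁₁₂ b₂₁₂ j hj).trans (le_orbitDimG3R2 α₁₂ α₂₁₂ hα j hj)

/-- In `𝔤₃(ℝ²)`, the functional `ℓ = α₁ℓ₁ + α₂ℓ₂ + α₁₂ℓ₁₂ + α₁₁₂ℓ₁₁₂ + α₂₁₂ℓ₂₁₂`
is in general position—its coadjoint orbit has maximal dimension in every quotient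
`𝔤₃*/𝔤₃*(j)` with respect to the strong Malcev basis `(X₁₁₂, X₂₁₂, X₁₂, X₁, X₂)`,
the dimension being the rank of the first `j` rows of the orbit differential—if and
only if `ℓ(X₁₁₂) = α₁₁₂ ≠ 0`. -/
theorem g3r2_general_position_iff (α₁ α₂ α₁₂ α₁₁₂ α₂₁₂ : ℝ) :
    (∀ (j : ℕ) (hj : j ≤ 5) (b₁ b₂ b₁₂ b₁₁₂ b₂₁₂ : ℝ),
        ((coadDiffG3R2 b₁₂ b₁₁₂ b₂₁₂).submatrix (Fin.castLE hj) id).rank ≤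
          ((coadDiffG3R2 α₁₂ α₁₁₂ α₂₁₂).submatrix (Fin.castLE hj) id).rank) ↔
      α₁₁₂ ≠ 0 :=
  g3r2_general_position_iff_general α₁₂ α₁₁₂ α₂₁₂
end
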